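/- The modified κ-entanglement is sub-additive: for bipartite states ρ on AB and ω on A'B', Ẽ_κ(ρ ⊗ ω) ≤ Ẽ_κ(ρ) + Ẽ_κ(ω). The key step: if S ± ρ^Γ ≥ 0 and T ± ω^Γ ≥ 0 then S⊗T ± ρ^Γ⊗ω^Γ ≥ 0, using the identity S⊗T ± ρ^Γ⊗ω^Γ = (1/2)[(S+ρ^Γ)⊗(T±ω^Γ) + (S−ρ^Γ)⊗(T∓ω^Γ)]. -/

import Mathlib

open Matrix BigOperators
open scoped Kronecker ComplexOrder

noncomputable section

abbrev BOp (d : ℕ) := Matrix (Fin d × Fin d) (Fin d × Fin d) ℂ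

/-- Loewner order: `A ≤ B` iff `B - A` is positive semidefinite. -/
def loe {n : Type*} [Fintype n] (A B : Matrix n n ℂ) : Prop := (B - A).PosSemidef

/-- A density operator: positive semidefinite with unit trace. -/
def IsState {n : Type*} [Fintype n] [DecidableEq n] (ρ : Matrix n n ℂ) : Prop :=
  ρ.PosSemidef ∧ ρ.trace = 1

/-- Separable bipartite state (convex combination of product states). -/
def IsSep {a b : Type*} [Fintype a] [DecidableEq a] [Fintype b] [DecidableEq b]
    (ρ : Matrix (a × b) (a × b) ℂ) : Prop :=
  ∃ (m : ℕ) (p : Fin m → ℝ) (A : Fin m → Matrix a a ℂ) (B : Fin m → Matrix b b ℂ),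
    (∀ i, 0 ≤ p i) ∧ (∑ i, p i) = 1 ∧
    (∀ i, IsState (A i)) ∧ (∀ i, IsState (B i)) ∧
    ρ = ∑ i, ((p i : ℝ) : ℂ) • (A i ⊗ₖ B i)

/-- The cone generated by separable states. -/
def InSepCone {a b : Type*} [Fintype a] [DecidableEq a] [Fintype b] [DecidableEq b]
    (S : Matrix (a × b) (a × b) ℂ) : Prop :=
  ∃ (c : ℝ) (σ : Matrix (a × b) (a × b) ℂ), 0 ≤ c ∧ IsSep σ ∧ S = ((c : ℝ) : ℂ) • σ

/-- Maximally entangled state `Φ_d` on `ℂ^d ⊗ ℂ^d`. -/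
def PhiME (d : ℕ) : BOp d := fun p q => if p.1 = p.2 ∧ q.1 = q.2 then ((1 : ℂ) / d) else 0

/-- `τ_d = (𝟙 - Φ_d)/(d² - 1)`. -/
def tauME (d : ℕ) : BOp d := (((d : ℂ)^2 - 1))⁻¹ • (1 - PhiME d)

/-- Partial transpose on the second tensor factor. -/
def pt {a b : Type*} (A : Matrix (a × b) (a × b) ℂ) : Matrix (a × b) (a × b) ℂ :=
  fun p q => A (p.1, q.2) (q.1, p.2)

/-- Total positive-semidefinite square root (junk value `0` off the PSD cone). -/
noncomputable def msqrt {n : Type*} [Fintype n] [DecidableEq n] (A : Matrix n n ℂ) :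
    Matrix n n ℂ :=
  open scoped Classical in
  if h : A.PosSemidef then (h.1.eigenvectorUnitary.1 *
      diagonal ((↑) ∘ (√·) ∘ h.1.eigenvalues) * (star h.1.eigenvectorUnitary : Matrix n n ℂ))
    else 0

/-- Trace norm `‖A‖₁ = Tr √(AᴴA)`. -/
noncomputable def traceNorm {n : Type*} [Fintype n] [DecidableEq n] (A : Matrix n n ℂ) : ℝ :=
  (msqrt (Aᴴ * A)).trace.re


/-- Modified κ-entanglement `Ẽ_κ(ρ) = log₂ min{Tr S : -S ≤ ρ^Γ ≤ S, S ∈ cone(S)}`. -/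
noncomputable def Ekappa {a b : Type*} [Fintype a] [DecidableEq a] [Fintype b] [DecidableEq b]
    (ρ : Matrix (a × b) (a × b) ℂ) : ℝ :=
  Real.logb 2
    (sInf {t : ℝ | ∃ S, InSepCone S ∧ loe (-S) (pt ρ) ∧ loe (pt ρ) S ∧ t = S.trace.re})

/-!
If `-S ≤ ρ^Γ ≤ S` and `-T ≤ ω^Γ ≤ T`, then `2 (S ⊗ T ∓ ρ^Γ ⊗ ω^Γ)` is a sum of two Kronecker
products of positive semidefinite matrices, so `S ⊗ T` is feasible for `ρ ⊗ ω`: regrouping the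
factors along the cut `AA' : BB'` preserves separability and turns the partial transpose of a
product into the product of the partial transposes. Its trace is `Tr S · Tr T`, hence the infimum
for `ρ ⊗ ω` is at most the product of the two infima. Feasible traces are at least
`Tr ρ^Γ = 1` and feasible points exist (multiples of the identity), so `log₂` of the infima is
well behaved and turns the product into a sum.
-/

theorem trace_reindex {m n R : Type*} [Fintype m] [Fintype n] [AddCommMonoid R] (e : m ≃ n)
    (A : Matrix m m R) : (reindex e e A).trace = A.trace :=
  e.symm.sum_comp fun i => A i i

theorem nonempty_of_trace_ne_zero {n R : Type*} [Fintype n] [AddCommMonoid R] {A : Matrix n n R}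
    (h : A.trace ≠ 0) : Nonempty n := by
  by_contra hn
  rw [not_nonempty_iff] at hn
  exact h (by simp [trace])

section LoewnerOrder

open scoped MatrixOrder

variable {m n : Type*} [Fintype m] [Fintype n]

theorem kronecker_mem_Icc {𝕜 : Type*} [RCLike 𝕜] {S P : Matrix m m 𝕜} {T Q : Matrix n n 𝕜}
    (hP : P ∈ Set.Icc (-S) S) (hQ : Q ∈ Set.Icc (-T) T) :
    P ⊗ₖ Q ∈ Set.Icc (-(S ⊗ₖ T)) (S ⊗ₖ T) := by
  have hSP : 0 ≤ S + P := neg_le_iff_add_nonneg'.mp hP.1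
  have hSP' : 0 ≤ S - P := sub_nonneg.mpr hP.2
  have hTQ : 0 ≤ T + Q := neg_le_iff_add_nonneg'.mp hQ.1
  have hTQ' : 0 ≤ T - Q := sub_nonneg.mpr hQ.2
  have half : (0 : 𝕜) ≤ 2⁻¹ := by positivity
  constructor
  · rw [neg_le_iff_add_nonneg']
    have hdecomp : S ⊗ₖ T + P ⊗ₖ Q = (2⁻¹ : 𝕜) • ((S + P) ⊗ₖ (T + Q) + (S - P) ⊗ₖ (T - Q)) := by
      ext ⟨i, j⟩ ⟨k, l⟩
      simp only [Matrix.add_apply, Matrix.sub_apply, Matrix.smul_apply, kroneckerMap_apply,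
        smul_eq_mul]
      ring
    rw [hdecomp]
    exact (((hSP.posSemidef.kronecker hTQ.posSemidef).add
      (hSP'.posSemidef.kronecker hTQ'.posSemidef)).smul half).nonneg
  · rw [← sub_nonneg]
    have hdecomp : S ⊗ₖ T - P ⊗ₖ Q = (2⁻¹ : 𝕜) • ((S + P) ⊗ₖ (T - Q) + (S - P) ⊗ₖ (T + Q)) := by
      ext ⟨i, j⟩ ⟨k, l⟩
      simp only [Matrix.add_apply, Matrix.sub_apply, Matrix.smul_apply, kroneckerMap_apply,
        smul_eq_mul]
      ring
    rw [hdecomp]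
    exact (((hSP.posSemidef.kronecker hTQ'.posSemidef).add
      (hSP'.posSemidef.kronecker hTQ.posSemidef)).smul half).nonneg

theorem loe_kronecker {S P : Matrix m m ℂ} {T Q : Matrix n n ℂ}
    (hSP : loe (-S) P) (hPS : loe P S) (hTQ : loe (-T) Q) (hQT : loe Q T) :
    loe (-(S ⊗ₖ T)) (P ⊗ₖ Q) ∧ loe (P ⊗ₖ Q) (S ⊗ₖ T) :=
  kronecker_mem_Icc ⟨hSP, hPS⟩ ⟨hTQ, hQT⟩

theorem loe_reindex (e : m ≃ n) {A B : Matrix m m ℂ} (h : loe A B) :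
    loe (reindex e e A) (reindex e e B) :=
  h.submatrix e.symm

end LoewnerOrder

theorem csInf_le_csInf_mul_csInf {s t u : Set ℝ} (hs : s.Nonempty) (ht : t.Nonempty)
    (hs₀ : ∀ x ∈ s, 0 ≤ x) (ht₀ : ∀ y ∈ t, 0 ≤ y) (hu : BddBelow u)
    (hmul : ∀ x ∈ s, ∀ y ∈ t, x * y ∈ u) : sInf u ≤ sInf s * sInf t := by
  have key : ∀ y ∈ t, sInf u ≤ sInf s * y := by
    intro y hy
    rw [mul_comm, ← smul_eq_mul, ← Real.sInf_smul_of_nonneg (ht₀ y hy)]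
    refine csInf_le_csInf hu hs.smul_set ?_
    rintro _ ⟨x, hx, rfl⟩
    simpa [mul_comm] using hmul x hx y hy
  rw [← smul_eq_mul, ← Real.sInf_smul_of_nonneg (Real.sInf_nonneg hs₀)]
  refine le_csInf ht.smul_set ?_
  rintro _ ⟨y, hy, rfl⟩
  exact key y hy

theorem logb_sInf_le_add {s t u : Set ℝ} {b : ℝ} (hb : 1 < b) (hs : s.Nonempty)
    (ht : t.Nonempty) (hs₁ : ∀ x ∈ s, 1 ≤ x) (ht₁ : ∀ y ∈ t, 1 ≤ y) (hu₁ : ∀ z ∈ u, 1 ≤ z)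
    (hmul : ∀ x ∈ s, ∀ y ∈ t, x * y ∈ u) :
    Real.logb b (sInf u) ≤ Real.logb b (sInf s) + Real.logb b (sInf t) := by
  obtain ⟨x, hx⟩ := hs
  obtain ⟨y, hy⟩ := ht
  have hu : u.Nonempty := ⟨x * y, hmul x hx y hy⟩
  have hs₀ : 0 < sInf s := one_pos.trans_le (le_csInf ⟨x, hx⟩ hs₁)
  have ht₀ : 0 < sInf t := one_pos.trans_le (le_csInf ⟨y, hy⟩ ht₁)
  have hu₀ : 0 < sInf u := one_pos.trans_le (le_csInf hu hu₁)
  rw [← Real.logb_mul hs₀.ne' ht₀.ne']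
  exact Real.logb_le_logb_of_le hb hu₀ (csInf_le_csInf_mul_csInf ⟨x, hx⟩ ⟨y, hy⟩
    (fun z hz => zero_le_one.trans (hs₁ z hz)) (fun z hz => zero_le_one.trans (ht₁ z hz))
    ⟨1, hu₁⟩ hmul)

section Separable

variable {a b a' b' : Type*} [Fintype a] [DecidableEq a] [Fintype b] [DecidableEq b]
  [Fintype a'] [DecidableEq a'] [Fintype b'] [DecidableEq b']

theorem IsState.kronecker {A : Matrix a a ℂ} {B : Matrix b b ℂ} (hA : IsState A)
    (hB : IsState B) : IsState (A ⊗ₖ B) :=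
  ⟨hA.1.kronecker hB.1, by rw [trace_kronecker, hA.2, hB.2, one_mul]⟩

theorem isState_inv_card_smul_one [Nonempty a] :
    IsState ((Fintype.card a : ℂ)⁻¹ • (1 : Matrix a a ℂ)) := by
  refine ⟨PosSemidef.one.smul (by positivity), ?_⟩
  rw [trace_smul, trace_one, smul_eq_mul, inv_mul_cancel₀ (by simp)]

theorem isSep_sum {ι : Type*} [Fintype ι] (p : ι → ℝ) (A : ι → Matrix a a ℂ)
    (B : ι → Matrix b b ℂ) (hp : ∀ i, 0 ≤ p i) (hp1 : ∑ i, p i = 1)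
    (hA : ∀ i, IsState (A i)) (hB : ∀ i, IsState (B i)) :
    IsSep (∑ i, (p i : ℂ) • (A i ⊗ₖ B i)) := by
  let e := (Fintype.equivFin ι).symm
  exact ⟨Fintype.card ι, p ∘ e, A ∘ e, B ∘ e, fun _ => hp _, (e.sum_comp p).trans hp1,
    fun _ => hA _, fun _ => hB _, (e.sum_comp fun i => (p i : ℂ) • (A i ⊗ₖ B i)).symm⟩

theorem IsState.isSep_kronecker {A : Matrix a a ℂ} {B : Matrix b b ℂ} (hA : IsState A)
    (hB : IsState B) : IsSep (A ⊗ₖ B) := by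
  simpa using isSep_sum (ι := Unit) (fun _ => 1) (fun _ => A) (fun _ => B) (fun _ => zero_le_one)
    (by simp) (fun _ => hA) (fun _ => hB)

theorem IsSep.posSemidef {σ : Matrix (a × b) (a × b) ℂ} (h : IsSep σ) : σ.PosSemidef := by
  obtain ⟨m, p, A, B, hp, -, hA, hB, rfl⟩ := h
  exact posSemidef_sum _ fun i _ =>
    ((hA i).1.kronecker (hB i).1).smul (Complex.zero_le_real.mpr (hp i))

theorem InSepCone.posSemidef {S : Matrix (a × b) (a × b) ℂ} (h : InSepCone S) :
    S.PosSemidef := by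
  obtain ⟨c, σ, hc, hσ, rfl⟩ := h
  exact hσ.posSemidef.smul (Complex.zero_le_real.mpr hc)

theorem InSepCone.smul {S : Matrix (a × b) (a × b) ℂ} (h : InSepCone S) {c : ℝ} (hc : 0 ≤ c) :
    InSepCone ((c : ℂ) • S) := by
  obtain ⟨c', σ, hc', hσ, rfl⟩ := h
  exact ⟨c * c', σ, mul_nonneg hc hc', hσ, by rw [smul_smul, Complex.ofReal_mul]⟩

theorem inSepCone_one [Nonempty a] [Nonempty b] : InSepCone (1 : Matrix (a × b) (a × b) ℂ) := by
  refine ⟨Fintype.card a * Fintype.card b, _, by positivity,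
    isState_inv_card_smul_one.isSep_kronecker isState_inv_card_smul_one, ?_⟩
  rw [smul_kronecker, kronecker_smul, one_kronecker_one, smul_smul, smul_smul]
  push_cast
  field_simp
  simp

theorem IsSep.reindex_kronecker {σ : Matrix (a × b) (a × b) ℂ}
    {σ' : Matrix (a' × b') (a' × b') ℂ} (hσ : IsSep σ) (hσ' : IsSep σ') :
    IsSep (reindex (Equiv.prodProdProdComm a b a' b') (Equiv.prodProdProdComm a b a' b')
      (σ ⊗ₖ σ')) := by
  obtain ⟨m, p, A, B, hp, hp1, hA, hB, rfl⟩ := hσ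
  obtain ⟨m', q, A', B', hq, hq1, hA', hB', rfl⟩ := hσ'
  convert isSep_sum (fun ij : Fin m × Fin m' => p ij.1 * q ij.2) (fun ij => A ij.1 ⊗ₖ A' ij.2)
    (fun ij => B ij.1 ⊗ₖ B' ij.2) (fun ij => mul_nonneg (hp _) (hq _))
    (by rw [Fintype.sum_prod_type, ← Finset.sum_mul_sum, hp1, hq1, one_mul])
    (fun ij => (hA _).kronecker (hA' _)) (fun ij => (hB _).kronecker (hB' _)) using 1
  ext ⟨⟨x, x'⟩, ⟨y, y'⟩⟩ ⟨⟨u, u'⟩, ⟨v, v'⟩⟩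
  simp only [reindex_apply, submatrix_apply, Equiv.prodProdProdComm_symm,
    Equiv.prodProdProdComm_apply, kroneckerMap_apply, Matrix.sum_apply, Matrix.smul_apply,
    smul_eq_mul, Fintype.sum_prod_type, Finset.sum_mul_sum]
  refine Finset.sum_congr rfl fun i _ => Finset.sum_congr rfl fun j _ => ?_
  push_cast
  ring

theorem InSepCone.reindex_kronecker {S : Matrix (a × b) (a × b) ℂ}
    {T : Matrix (a' × b') (a' × b') ℂ} (hS : InSepCone S) (hT : InSepCone T) :
    InSepCone (reindex (Equiv.prodProdProdComm a b a' b') (Equiv.prodProdProdComm a b a' b')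
      (S ⊗ₖ T)) := by
  obtain ⟨c, σ, hc, hσ, rfl⟩ := hS
  obtain ⟨c', σ', hc', hσ', rfl⟩ := hT
  refine ⟨c * c', _, mul_nonneg hc hc', hσ.reindex_kronecker hσ', ?_⟩
  rw [smul_kronecker, kronecker_smul, smul_smul, reindex_apply, submatrix_smul,
    Complex.ofReal_mul]
  rfl

end Separable

theorem pt_reindex_kronecker {a b a' b' : Type*} (ρ : Matrix (a × b) (a × b) ℂ)
    (ω : Matrix (a' × b') (a' × b') ℂ) :
    pt (reindex (Equiv.prodProdProdComm a b a' b') (Equiv.prodProdProdComm a b a' b') (ρ ⊗ₖ ω)) =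
      reindex (Equiv.prodProdProdComm a b a' b') (Equiv.prodProdProdComm a b a' b')
        (pt ρ ⊗ₖ pt ω) :=
  rfl

theorem Matrix.IsHermitian.pt {a b : Type*} {ρ : Matrix (a × b) (a × b) ℂ} (h : ρ.IsHermitian) :
    (pt ρ).IsHermitian :=
  ext fun p q => by
    simpa [conjTranspose_apply, _root_.pt] using congrFun₂ h.eq (p.1, q.2) (q.1, p.2)

theorem trace_pt {a b : Type*} [Fintype a] [Fintype b] (ρ : Matrix (a × b) (a × b) ℂ) :
    (pt ρ).trace = ρ.trace :=
  rfl

section Ekappa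

open scoped MatrixOrder Matrix.Norms.L2Operator

variable {a b : Type*} [Fintype a] [DecidableEq a] [Fintype b] [DecidableEq b]

def ekappaTraces (ρ : Matrix (a × b) (a × b) ℂ) : Set ℝ :=
  {t : ℝ | ∃ S, InSepCone S ∧ loe (-S) (pt ρ) ∧ loe (pt ρ) S ∧ t = S.trace.re}

theorem Ekappa_eq_logb_sInf (ρ : Matrix (a × b) (a × b) ℂ) :
    Ekappa ρ = Real.logb 2 (sInf (ekappaTraces ρ)) :=
  rfl

theorem one_le_of_mem_ekappaTraces {ρ : Matrix (a × b) (a × b) ℂ} (hρ : ρ.trace = 1) {t : ℝ}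
    (ht : t ∈ ekappaTraces ρ) : 1 ≤ t := by
  obtain ⟨S, -, -, hS, rfl⟩ := ht
  have htr := (Complex.nonneg_iff.mp hS.trace_nonneg).1
  rwa [trace_sub, Complex.sub_re, trace_pt, hρ, Complex.one_re, sub_nonneg] at htr

theorem ekappaTraces_nonempty [Nonempty a] [Nonempty b] {ρ : Matrix (a × b) (a × b) ℂ}
    (hρ : ρ.IsHermitian) : (ekappaTraces ρ).Nonempty := by
  have hρΓ : IsSelfAdjoint (pt ρ) := hρ.pt
  have hlow := hρΓ.neg_algebraMap_norm_le_self
  have hup := hρΓ.le_algebraMap_norm_self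
  rw [Algebra.algebraMap_eq_smul_one, ← Complex.coe_smul] at hlow hup
  exact ⟨_, _, inSepCone_one.smul (norm_nonneg (pt ρ)), hlow, hup, rfl⟩

theorem mul_mem_ekappaTraces_reindex_kronecker {a' b' : Type*} [Fintype a'] [DecidableEq a']
    [Fintype b'] [DecidableEq b'] {ρ : Matrix (a × b) (a × b) ℂ}
    {ω : Matrix (a' × b') (a' × b') ℂ} {s t : ℝ}
    (hs : s ∈ ekappaTraces ρ) (ht : t ∈ ekappaTraces ω) :
    s * t ∈ ekappaTraces (reindex (Equiv.prodProdProdComm a b a' b')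
      (Equiv.prodProdProdComm a b a' b') (ρ ⊗ₖ ω)) := by
  obtain ⟨S, hS, hSρ, hρS, rfl⟩ := hs
  obtain ⟨T, hT, hTω, hωT, rfl⟩ := ht
  obtain ⟨hlow, hup⟩ := loe_kronecker hSρ hρS hTω hωT
  have hSim := (Complex.nonneg_iff.mp hS.posSemidef.trace_nonneg).2
  have hTim := (Complex.nonneg_iff.mp hT.posSemidef.trace_nonneg).2
  refine ⟨_, hS.reindex_kronecker hT, ?_, ?_, ?_⟩
  · rw [pt_reindex_kronecker]
    exact loe_reindex _ hlow
  · rw [pt_reindex_kronecker]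
    exact loe_reindex _ hup
  · rw [trace_reindex, trace_kronecker, Complex.mul_re, ← hSim, ← hTim, mul_zero, sub_zero]

end Ekappa

theorem stmt8 {a b a' b' : Type*}
    [Fintype a] [DecidableEq a] [Fintype b] [DecidableEq b]
    [Fintype a'] [DecidableEq a'] [Fintype b'] [DecidableEq b']
    (ρ : Matrix (a × b) (a × b) ℂ) (ω : Matrix (a' × b') (a' × b') ℂ)
    (hρ : IsState ρ) (hω : IsState ω) :
    (∀ (S : Matrix (a × b) (a × b) ℂ) (T : Matrix (a' × b') (a' × b') ℂ),
        loe (-S) (pt ρ) → loe (pt ρ) S → loe (-T) (pt ω) → loe (pt ω) T →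
        loe (-(S ⊗ₖ T)) (pt ρ ⊗ₖ pt ω) ∧ loe (pt ρ ⊗ₖ pt ω) (S ⊗ₖ T)) ∧
    Ekappa ((Matrix.reindex (Equiv.prodProdProdComm a b a' b')
        (Equiv.prodProdProdComm a b a' b')) (ρ ⊗ₖ ω)) ≤ Ekappa ρ + Ekappa ω := by
  refine ⟨fun S T => loe_kronecker, ?_⟩
  obtain ⟨_, _⟩ := nonempty_prod.mp (nonempty_of_trace_ne_zero (hρ.2 ▸ one_ne_zero))
  obtain ⟨_, _⟩ := nonempty_prod.mp (nonempty_of_trace_ne_zero (hω.2 ▸ one_ne_zero))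
  have hρω : (reindex (Equiv.prodProdProdComm a b a' b') (Equiv.prodProdProdComm a b a' b')
      (ρ ⊗ₖ ω)).trace = 1 := by
    rw [trace_reindex, trace_kronecker, hρ.2, hω.2, one_mul]
  simp only [Ekappa_eq_logb_sInf]
  exact logb_sInf_le_add one_lt_two (ekappaTraces_nonempty hρ.1.1)
    (ekappaTraces_nonempty hω.1.1) (fun _ => one_le_of_mem_ekappaTraces hρ.2)
    (fun _ => one_le_of_mem_ekappaTraces hω.2) (fun _ => one_le_of_mem_ekappaTraces hρω)
    fun _ hs _ ht => mul_mem_ekappaTraces_reindex_kronecker hs ht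

end
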